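/- arXiv:1405.6813 — 3 statements merged into one kernel-verified Lean document; each statement's English description precedes it below -/
import Mathlib

section
/- There exist an absolute constant ε₀ > 0 and a real number p > 1 such that the function g₀ : (0,∞) → ℝ, g₀(t) = exp(-t^{-p}), satisfies |g₀^{(j)}(t)| ≤ (j! · 2ʲ / tʲ) · exp(-ε₀ (2t)^{-p}) for every j ∈ ℕ₀ and every t > 0, where g₀^{(j)} denotes the j-th derivative of g₀. -/
open Real

noncomputable section

namespace TychonoffAux

/-- The complex function `F z = exp (-(z^2)⁻¹)`. -/
def Fc : ℂ → ℂ := fun z => Complex.exp (-((z ^ 2)⁻¹))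

lemma Fc_diffOn : DifferentiableOn ℂ Fc {(0 : ℂ)}ᶜ := by
  intro z hz
  have hz' : z ≠ 0 := hz
  exact (((differentiableAt_id.pow 2).inv (pow_ne_zero 2 hz')).neg.cexp).differentiableWithinAt

lemma Fc_analytic (n : ℕ) : AnalyticOnNhd ℂ (iteratedDeriv n Fc) {(0 : ℂ)}ᶜ := by
  induction n with
  | zero => simpa [iteratedDeriv_zero] using Fc_diffOn.analyticOnNhd isOpen_compl_singleton
  | succ n ih => rw [iteratedDeriv_succ]; exact ih.deriv

/-- The real restriction. -/
def g2 : ℝ → ℝ := fun τ => Real.exp (-((τ ^ 2)⁻¹))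

lemma ofReal_g2 (τ : ℝ) : ((g2 τ : ℝ) : ℂ) = Fc (τ : ℂ) := by
  simp only [g2, Fc, Complex.ofReal_exp, Complex.ofReal_neg, Complex.ofReal_inv,
    Complex.ofReal_pow]

lemma real_eq_complex : ∀ (n : ℕ) (t : ℝ), t ≠ 0 →
    ((iteratedDeriv n g2 t : ℝ) : ℂ) = iteratedDeriv n Fc (t : ℂ) := by
  intro n
  induction n with
  | zero => intro t _; simpa [iteratedDeriv_zero] using ofReal_g2 t
  | succ n ih =>
    intro t ht
    have htC : (t : ℂ) ≠ 0 := Complex.ofReal_ne_zero.mpr ht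
    set d := deriv (iteratedDeriv n Fc) (t : ℂ) with hd_def
    have hdiff : DifferentiableAt ℂ (iteratedDeriv n Fc) (t : ℂ) :=
      (Fc_analytic n (t : ℂ) htC).differentiableAt
    have hd : HasDerivAt (iteratedDeriv n Fc) d (t : ℂ) := hdiff.hasDerivAt
    have h1 : HasDerivAt (fun y : ℝ => iteratedDeriv n Fc (y : ℂ)) d t := hd.comp_ofReal
    have hev : (fun y : ℝ => ((iteratedDeriv n g2 y : ℝ) : ℂ)) =ᶠ[nhds t]
        (fun y : ℝ => iteratedDeriv n Fc (y : ℂ)) := by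
      have hopen : IsOpen {y : ℝ | y ≠ 0} := isOpen_compl_singleton
      filter_upwards [hopen.mem_nhds ht] with y hy
      exact ih y hy
    have h3 : HasDerivAt (fun y : ℝ => ((iteratedDeriv n g2 y : ℝ) : ℂ)) d t :=
      h1.congr_of_eventuallyEq hev
    have h4 : HasDerivAt (fun y : ℝ => iteratedDeriv n g2 y) d.re t := by
      have := Complex.reCLM.hasFDerivAt.comp_hasDerivAt t h3
      simpa [Function.comp_def] using this
    have h5 : d.im = 0 := by
      have h6 := Complex.imCLM.hasFDerivAt.comp_hasDerivAt t h3
      have h7 : (Complex.imCLM ∘ fun y : ℝ => ((iteratedDeriv n g2 y : ℝ) : ℂ)) =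
          fun _ : ℝ => (0 : ℝ) := by
        funext y; simp
      rw [h7] at h6
      have h8 := h6.unique (hasDerivAt_const t 0)
      simpa using h8
    have :  iteratedDeriv (n + 1) g2 t = d.re := by
      rw [iteratedDeriv_succ]; exact h4.deriv
    rw [this, iteratedDeriv_succ, ← hd_def]
    exact Complex.ext (by simp) (by simp [h5])

lemma circle_ne_zero {t : ℝ} (ht : 0 < t) (θ : ℝ) : circleMap (t : ℂ) (t / 2) θ ≠ 0 := by
  intro h
  have hre : (circleMap (t : ℂ) (t / 2) θ).re = t + t / 2 * Real.cos θ := by simp [circleMap]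
  rw [h] at hre
  have hc : -1 ≤ Real.cos θ := Real.neg_one_le_cos θ
  simp only [Complex.zero_re] at hre
  nlinarith

lemma circle_bound {t : ℝ} (ht : 0 < t) (θ : ℝ) :
    ‖Fc (circleMap (t : ℂ) (t / 2) θ)‖ ≤ Real.exp (-(16 / 81) * (2 * t) ^ (-(2 : ℝ))) := by
  set z := circleMap (t : ℂ) (t / 2) θ with hz_def
  have hzre : z.re = t + t / 2 * Real.cos θ := by simp [hz_def, circleMap]
  have hzim : z.im = t / 2 * Real.sin θ := by simp [hz_def, circleMap]
  have hz0 : z ≠ 0 := circle_ne_zero ht θ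
  have habs : ‖Fc z‖ = Real.exp (-((z ^ 2).re / Complex.normSq (z ^ 2))) := by
    rw [Fc, Complex.norm_exp]
    congr 1
    rw [Complex.neg_re, Complex.inv_re]
  rw [habs]
  apply Real.exp_le_exp.mpr
  have hrw : (2 * t) ^ (-(2 : ℝ)) = ((2 * t) ^ 2)⁻¹ := by
    rw [show (-(2 : ℝ)) = ((-2 : ℤ) : ℝ) by norm_num, Real.rpow_intCast]
    simp [zpow_ofNat]
  rw [hrw, neg_mul, neg_le_neg_iff]
  have hns : Complex.normSq (z ^ 2) = (z.re * z.re + z.im * z.im) ^ 2 := by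
    rw [map_pow, Complex.normSq_apply]
  have hre2 : (z ^ 2).re = z.re * z.re - z.im * z.im := by
    rw [sq, Complex.mul_re]
  rw [hns, hre2, hzre, hzim]
  set c := Real.cos θ
  set s := Real.sin θ
  have hcs : s ^ 2 + c ^ 2 = 1 := Real.sin_sq_add_cos_sq θ
  have hc1 : -1 ≤ c := Real.neg_one_le_cos θ
  have hden : (0 : ℝ) < ((t + t / 2 * c) * (t + t / 2 * c) + t / 2 * s * (t / 2 * s)) ^ 2 := by
    have hpos : (0 : ℝ) < (t + t / 2 * c) * (t + t / 2 * c) + t / 2 * s * (t / 2 * s) := by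
      nlinarith [sq_nonneg s, sq_nonneg (t / 2 * s)]
    positivity
  have hlhs : (16 / 81 : ℝ) * ((2 * t) ^ 2)⁻¹ = 16 / (81 * (2 * t) ^ 2) := by
    field_simp
  rw [hlhs, div_le_div_iff₀ (by positivity) hden]
  nlinarith [sq_nonneg (t ^ 2 * (c + 1)), sq_nonneg (t ^ 2 * c), sq_nonneg t, sq_nonneg c,
    sq_nonneg (c + 1), mul_pos ht ht, sq_nonneg (t ^ 2 * (c - 1)), sq_nonneg s]

lemma cauchy_bound (n : ℕ) (t : ℝ) (ht : 0 < t) :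
    ‖iteratedDeriv n Fc (t : ℂ)‖ ≤
      (n.factorial : ℝ) * 2 ^ n / t ^ n * Real.exp (-(16 / 81) * (2 * t) ^ (-(2 : ℝ))) := by
  set R : NNReal := ⟨t / 2, by positivity⟩ with hR_def
  have hRpos : 0 < R := by
    rw [← NNReal.coe_lt_coe]
    show (0 : ℝ) < t / 2
    positivity
  have hRcoe : (R : ℝ) = t / 2 := rfl
  have hsub : Metric.closedBall (t : ℂ) (R : ℝ) ⊆ {(0 : ℂ)}ᶜ := by
    intro z hz
    simp only [Metric.mem_closedBall] at hz
    intro h0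
    rw [Set.mem_singleton_iff] at h0
    subst h0
    rw [dist_comm, Complex.dist_eq] at hz
    have : t ≤ t / 2 := by
      calc t = ‖(t : ℂ)‖ := by simp [abs_of_pos ht]
        _ ≤ t / 2 := by simpa [hRcoe] using hz
    linarith
  have hd : DifferentiableOn ℂ Fc (Metric.closedBall (t : ℂ) (R : ℝ)) := Fc_diffOn.mono hsub
  have hps := hd.hasFPowerSeriesOnBall hRpos
  have key := hps.factorial_smul (1 : ℂ) n
  set p := cauchyPowerSeries Fc (t : ℂ) (R : ℝ) with hp_def
  set M := Real.exp (-(16 / 81) * (2 * t) ^ (-(2 : ℝ))) with hM_def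
  have hMpos : 0 < M := Real.exp_pos _
  -- step 1: identify iteratedDeriv with power series coefficient
  have h1 : ‖iteratedDeriv n Fc (t : ℂ)‖ = (n.factorial : ℝ) * ‖p n fun _ => (1 : ℂ)‖ := by
    rw [iteratedDeriv_eq_iteratedFDeriv, ← key, ← Nat.cast_smul_eq_nsmul ℝ, norm_smul]
    simp
  -- step 2: coefficient norm bound
  have h2 : ‖p n fun _ => (1 : ℂ)‖ ≤ ‖p n‖ := by
    have := (p n).le_opNorm fun _ => (1 : ℂ)
    simpa using this
  -- step 3: Cauchy estimate
  have h3 : ‖p n‖ ≤ M * |(R : ℝ)|⁻¹ ^ n := by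
    refine (norm_cauchyPowerSeries_le Fc (t : ℂ) (R : ℝ) n).trans ?_
    apply mul_le_mul_of_nonneg_right _ (by positivity)
    -- bound the integral
    have hcont : Continuous fun θ : ℝ => ‖Fc (circleMap (t : ℂ) (R : ℝ) θ)‖ := by
      apply Continuous.norm
      rw [continuous_iff_continuousAt]
      intro θ
      have hz : circleMap (t : ℂ) (R : ℝ) θ ≠ 0 := by
        rw [hRcoe]; exact circle_ne_zero ht θ
      exact ((((continuous_circleMap (t : ℂ) (R : ℝ)).continuousAt (x := θ)).pow 2).inv₀
        (pow_ne_zero 2 hz)).neg.cexp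
    have hint : (∫ θ : ℝ in (0)..(2 * Real.pi), ‖Fc (circleMap (t : ℂ) (R : ℝ) θ)‖) ≤
        (2 * Real.pi) * M := by
      have := intervalIntegral.integral_mono_on (a := 0) (b := 2 * Real.pi)
        Real.two_pi_pos.le (hcont.intervalIntegrable 0 (2 * Real.pi))
        (intervalIntegrable_const (c := M) (μ := MeasureTheory.volume) (a := 0) (b := 2 * Real.pi))
        (fun θ _ => by rw [hRcoe]; exact circle_bound ht θ)
      simpa using this
    calc (2 * Real.pi)⁻¹ * ∫ θ : ℝ in (0)..(2 * Real.pi), ‖Fc (circleMap (t : ℂ) (R : ℝ) θ)‖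
        ≤ (2 * Real.pi)⁻¹ * ((2 * Real.pi) * M) := by
          apply mul_le_mul_of_nonneg_left hint (by positivity)
      _ = M := by field_simp
  have h4 : |(R : ℝ)|⁻¹ ^ n = 2 ^ n / t ^ n := by
    rw [hRcoe, abs_of_pos (by positivity : (0:ℝ) < t / 2)]
    rw [← div_pow]
    congr 1
    field_simp
  calc ‖iteratedDeriv n Fc (t : ℂ)‖ = (n.factorial : ℝ) * ‖p n fun _ => (1 : ℂ)‖ := h1
    _ ≤ (n.factorial : ℝ) * (M * |(R : ℝ)|⁻¹ ^ n) :=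
        mul_le_mul_of_nonneg_left (h2.trans h3) (by positivity)
    _ = (n.factorial : ℝ) * 2 ^ n / t ^ n * M := by rw [h4]; ring

end TychonoffAux

open TychonoffAux in
/-- **Lemma (Tychonoff-type derivative estimates).** There exist an absolute constant
`ε₀ > 0` and `p > 1` such that `g₀(t) = exp(-t^{-p})` satisfies
`|g₀^{(j)}(t)| ≤ (j! 2ʲ / tʲ) exp(-ε₀(2t)^{-p})` for all `j ∈ ℕ₀` and `t > 0`. -/
theorem tychonoff_derivative_estimate :
    ∃ ε₀ : ℝ, 0 < ε₀ ∧ ∃ p : ℝ, 1 < p ∧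
      ∀ (j : ℕ) (t : ℝ), 0 < t →
        |iteratedDeriv j (fun τ : ℝ => Real.exp (-(τ ^ (-p)))) t|
          ≤ (j.factorial : ℝ) * 2 ^ j / t ^ j * Real.exp (-ε₀ * (2 * t) ^ (-p)) := by
  refine ⟨16 / 81, by norm_num, 2, one_lt_two, ?_⟩
  intro j t ht
  have hev : (fun τ : ℝ => Real.exp (-(τ ^ (-(2 : ℝ))))) =ᶠ[nhds t] g2 := by
    filter_upwards [isOpen_Ioi.mem_nhds (Set.mem_Ioi.mpr ht)] with τ hτ
    have hτ0 : (0 : ℝ) < τ := hτ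
    have : τ ^ (-(2 : ℝ)) = (τ ^ 2)⁻¹ := by
      rw [show (-(2 : ℝ)) = ((-2 : ℤ) : ℝ) by norm_num, Real.rpow_intCast]
      simp [zpow_ofNat]
    rw [g2, this]
  rw [hev.iteratedDeriv_eq j]
  have heq : |iteratedDeriv j g2 t| = ‖iteratedDeriv j Fc (t : ℂ)‖ := by
    rw [← real_eq_complex j t ht.ne']
    rw [Complex.norm_real, Real.norm_eq_abs]
  rw [heq]
  exact cauchy_bound j t ht
end
end

section
/- Let k ∈ ℕ with k ≥ 1, and let p > 1 and ε₀ > 0 be such that g₀(t) := exp(-t^{-p}) satisfies |g₀^{(j)}(t)| ≤ (j! 2ʲ / tʲ) exp(-ε₀(2t)^{-p}) for all j ∈ ℕ₀ and all t > 0. Then for every t > 0 and every x = (x₁,…,xₙ) ∈ ℝⁿ the series Σ_{j=0}^∞ (g₀^{(j)}(t)/(2jk)!) x₁^{2jk} converges absolutely and Σ_{j=0}^∞ (|g₀^{(j)}(t)|/(2jk)!) |x₁|^{2jk} ≤ exp( -ε₀(2t)^{-p} + |x₁|^{2k}/(t/2) ). -/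
open Real

noncomputable section

lemma tychonoff_exp_tsum (a : ℝ) : (∑' j : ℕ, a ^ j / j.factorial) = Real.exp a := by
  rw [Real.exp_eq_exp_ℝ, NormedSpace.exp_eq_tsum_div]

/-- **Convergence and bound for the Tychonoff series.** If `g₀(t) = exp(-t^{-p})` with
`p > 1` satisfies `|g₀^{(j)}(t)| ≤ (j! 2ʲ/tʲ) exp(-ε₀(2t)^{-p})` for all `j` and `t > 0`,
then for `k ≥ 1`, `t > 0` and `x₁ ∈ ℝ` the series `∑ⱼ (g₀^{(j)}(t)/(2jk)!) x₁^{2jk}`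
converges absolutely, with
`∑ⱼ (|g₀^{(j)}(t)|/(2jk)!) |x₁|^{2jk} ≤ exp(-ε₀(2t)^{-p} + x₁^{2k}/(t/2))`. -/
theorem tychonoff_series_bound (k : ℕ) (hk : 1 ≤ k) (p ε₀ : ℝ) (hp : 1 < p) (hε₀ : 0 < ε₀)
    (hg : ∀ (j : ℕ) (t : ℝ), 0 < t →
      |iteratedDeriv j (fun τ : ℝ => Real.exp (-(τ ^ (-p)))) t|
        ≤ (j.factorial : ℝ) * 2 ^ j / t ^ j * Real.exp (-ε₀ * (2 * t) ^ (-p))) :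
    ∀ (t : ℝ), 0 < t → ∀ x₁ : ℝ,
      Summable (fun j : ℕ =>
        |iteratedDeriv j (fun τ : ℝ => Real.exp (-(τ ^ (-p)))) t|
          / ((2 * j * k).factorial : ℝ) * |x₁| ^ (2 * j * k)) ∧
      (∑' j : ℕ,
        |iteratedDeriv j (fun τ : ℝ => Real.exp (-(τ ^ (-p)))) t|
          / ((2 * j * k).factorial : ℝ) * |x₁| ^ (2 * j * k))
        ≤ Real.exp (-ε₀ * (2 * t) ^ (-p) + x₁ ^ (2 * k) / (t / 2)) := by
  intro t ht x₁
  set E := Real.exp (-ε₀ * (2 * t) ^ (-p)) with hE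
  have hEpos : 0 < E := Real.exp_pos _
  set a : ℝ := 2 * |x₁| ^ (2 * k) / t with ha
  have ha0 : 0 ≤ a := by positivity
  -- factorial inequality : (j!)² ≤ (2jk)!
  have hfact : ∀ j : ℕ, (j.factorial * j.factorial : ℕ) ≤ (2 * j * k).factorial := by
    intro j
    have h1 : j.factorial * j.factorial ≤ (2 * j).factorial := by
      have hc := Nat.choose_mul_factorial_mul_factorial (show j ≤ 2 * j by omega)
      have hc1 : 1 ≤ (2 * j).choose j := Nat.choose_pos (by omega)
      have h2j : 2 * j - j = j := by omega
      rw [h2j] at hc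
      calc j.factorial * j.factorial = 1 * j.factorial * j.factorial := by ring
        _ ≤ (2 * j).choose j * j.factorial * j.factorial := by
            exact Nat.mul_le_mul_right _ (Nat.mul_le_mul_right _ hc1)
        _ = (2 * j).factorial := hc
    exact h1.trans (Nat.factorial_le (by nlinarith))
  -- termwise bound
  have hterm : ∀ j : ℕ,
      |iteratedDeriv j (fun τ : ℝ => Real.exp (-(τ ^ (-p)))) t|
        / ((2 * j * k).factorial : ℝ) * |x₁| ^ (2 * j * k)
      ≤ E * (a ^ j / j.factorial) := by
    intro j
    have hg' := hg j t ht
    have hFpos : (0:ℝ) < ((2 * j * k).factorial : ℝ) := by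
      exact_mod_cast Nat.factorial_pos _
    have hjpos : (0:ℝ) < (j.factorial : ℝ) := by exact_mod_cast Nat.factorial_pos _
    have hx : |x₁| ^ (2 * j * k) = (|x₁| ^ (2 * k)) ^ j := by
      rw [← pow_mul]; ring_nf
    have hC : (0:ℝ) ≤ 2 ^ j / t ^ j * E * (|x₁| ^ (2 * k)) ^ j := by positivity
    have hdiv : (j.factorial : ℝ) / ((2 * j * k).factorial : ℝ) ≤ 1 / (j.factorial : ℝ) := by
      rw [div_le_div_iff₀ hFpos hjpos]
      have := hfact j
      have : ((j.factorial * j.factorial : ℕ) : ℝ) ≤ (((2 * j * k).factorial : ℕ) : ℝ) := by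
        exact_mod_cast this
      push_cast at this
      nlinarith
    have haj : a ^ j = 2 ^ j * (|x₁| ^ (2 * k)) ^ j / t ^ j := by
      rw [ha, div_pow, mul_pow]
    calc |iteratedDeriv j (fun τ : ℝ => Real.exp (-(τ ^ (-p)))) t|
          / ((2 * j * k).factorial : ℝ) * |x₁| ^ (2 * j * k)
        ≤ ((j.factorial : ℝ) * 2 ^ j / t ^ j * E) / ((2 * j * k).factorial : ℝ)
            * (|x₁| ^ (2 * k)) ^ j := by
          rw [hx]
          gcongr
      _ = ((j.factorial : ℝ) / ((2 * j * k).factorial : ℝ))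
            * (2 ^ j / t ^ j * E * (|x₁| ^ (2 * k)) ^ j) := by ring
      _ ≤ (1 / (j.factorial : ℝ)) * (2 ^ j / t ^ j * E * (|x₁| ^ (2 * k)) ^ j) :=
          mul_le_mul_of_nonneg_right hdiv hC
      _ = E * (a ^ j / j.factorial) := by rw [haj]; field_simp
  have hsum2 : Summable (fun j : ℕ => E * (a ^ j / j.factorial)) :=
    (Real.summable_pow_div_factorial a).mul_left E
  have hnonneg : ∀ j : ℕ, 0 ≤ |iteratedDeriv j (fun τ : ℝ => Real.exp (-(τ ^ (-p)))) t|
        / ((2 * j * k).factorial : ℝ) * |x₁| ^ (2 * j * k) := by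
    intro j; positivity
  have hsum1 : Summable (fun j : ℕ =>
      |iteratedDeriv j (fun τ : ℝ => Real.exp (-(τ ^ (-p)))) t|
        / ((2 * j * k).factorial : ℝ) * |x₁| ^ (2 * j * k)) :=
    Summable.of_nonneg_of_le hnonneg hterm hsum2
  refine ⟨hsum1, ?_⟩
  have habs : |x₁| ^ (2 * k) = x₁ ^ (2 * k) := by
    rw [pow_mul, pow_mul, sq_abs]
  have hxa : x₁ ^ (2 * k) / (t / 2) = a := by
    rw [ha, habs]; field_simp
  calc (∑' j : ℕ, |iteratedDeriv j (fun τ : ℝ => Real.exp (-(τ ^ (-p)))) t|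
          / ((2 * j * k).factorial : ℝ) * |x₁| ^ (2 * j * k))
      ≤ ∑' j : ℕ, E * (a ^ j / j.factorial) := Summable.tsum_le_tsum hterm hsum1 hsum2
    _ = E * ∑' j : ℕ, a ^ j / j.factorial := tsum_mul_left
    _ = E * Real.exp a := by rw [tychonoff_exp_tsum]
    _ = Real.exp (-ε₀ * (2 * t) ^ (-p) + x₁ ^ (2 * k) / (t / 2)) := by
        rw [hE, ← Real.exp_add, hxa]
end
end

section
/- For every n ∈ ℕ there exist a smooth function u : ℝⁿ × (0,∞) → ℝ solving the biharmonic heat equation ∂ₜu = -Δ²u on ℝⁿ × (0,∞) and constants k₀ > 0 and k₁ ≠ 0 such that: (i) for every s > 0 there exists a point x_s ∈ ℝⁿ with |Δu|²(x_s, s) = k₀/s, and (ii) for every t > 0 there exists a point y(t) ∈ ℝⁿ with (Δ²u)(y(t), t) = k₁/t. In particular the bounds |Δu|² ≤ k₀/t and |Δ²u| ≤ |k₁|/t are attained at all times, so the speed |∂ₜu| of the solution is not integrable in time near t = 0. -/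
open MeasureTheory Metric Set

noncomputable section

/-- The spatial Laplacian of a function `f : ℝⁿ → ℝ`: `Δf(x) = ∑ i, ∂²f/∂xᵢ²(x)`. -/
def Lap {n : ℕ} (f : EuclideanSpace ℝ (Fin n) → ℝ) : EuclideanSpace ℝ (Fin n) → ℝ :=
  fun x => ∑ i : Fin n,
    iteratedFDeriv ℝ 2 f x (fun _ => EuclideanSpace.single i (1 : ℝ))

/-- The `k`-th iterated Laplacian (`iterLap 0 f = f`, `iterLap 2 f = Δ²f`). -/
def iterLap {n : ℕ} (k : ℕ) (f : EuclideanSpace ℝ (Fin n) → ℝ) :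
    EuclideanSpace ℝ (Fin n) → ℝ :=
  Lap^[k] f

lemma lap_comp_proj {n : ℕ} (i0 : Fin n) (g : ℝ → ℝ) (hg : ContDiff ℝ (⊤ : ℕ∞) g)
    (x : EuclideanSpace ℝ (Fin n)) :
    Lap (fun y => g (y i0)) x = iteratedDeriv 2 g (x i0) := by
  have hcomp : (fun y : EuclideanSpace ℝ (Fin n) => g (y i0)) =
      g ∘ (EuclideanSpace.proj i0 : EuclideanSpace ℝ (Fin n) →L[ℝ] ℝ) := rfl
  unfold Lap
  rw [hcomp]
  have key : ∀ i : Fin n,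
      iteratedFDeriv ℝ 2 (g ∘ (EuclideanSpace.proj i0 : EuclideanSpace ℝ (Fin n) →L[ℝ] ℝ)) x
        (fun _ => EuclideanSpace.single i (1 : ℝ)) =
      (∏ _j : Fin 2, (EuclideanSpace.single i (1:ℝ) : EuclideanSpace ℝ (Fin n)) i0) •
        iteratedDeriv 2 g (x i0) := by
    intro i
    rw [ContinuousLinearMap.iteratedFDeriv_comp_right _ hg x (WithTop.coe_le_coe.mpr le_top)]
    rw [ContinuousMultilinearMap.compContinuousLinearMap_apply]
    exact iteratedFDeriv_apply_eq_iteratedDeriv_mul_prod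
  simp only [key]
  rw [Finset.sum_eq_single i0]
  · simp [EuclideanSpace.single_apply]
  · intro b _ hb
    simp [EuclideanSpace.single_apply, Ne.symm hb]
  · simp

lemma iteratedDeriv_two_eq (g : ℝ → ℝ) : iteratedDeriv 2 g = deriv (deriv g) := by
  rw [iteratedDeriv_succ, iteratedDeriv_one]

lemma g1_second_deriv (t : ℝ) :
    iteratedDeriv 2 (fun s : ℝ => t * s - s ^ 5 / 120) = fun s => -(s ^ 3) / 6 := by
  have d1 : deriv (fun s : ℝ => t * s - s ^ 5 / 120) = fun s => t - s ^ 4 / 24 := by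
    funext s
    have h : HasDerivAt (fun s : ℝ => t * s - s ^ 5 / 120) (t - s ^ 4 / 24) s := by
      have := ((hasDerivAt_id s).const_mul t).sub ((hasDerivAt_pow 5 s).div_const 120)
      exact this.congr_deriv (by push_cast; ring)
    exact h.deriv
  rw [iteratedDeriv_two_eq, d1]
  funext s
  have h : HasDerivAt (fun s : ℝ => t - s ^ 4 / 24) (-(s ^ 3) / 6) s := by
    have := (hasDerivAt_const s t).sub ((hasDerivAt_pow 4 s).div_const 24)
    exact this.congr_deriv (by push_cast; ring)
  exact h.deriv

lemma g2_second_deriv :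
    iteratedDeriv 2 (fun s : ℝ => -(s ^ 3) / 6) = fun s => -s := by
  have d1 : deriv (fun s : ℝ => -(s ^ 3) / 6) = fun s => -(s ^ 2) / 2 := by
    funext s
    have h : HasDerivAt (fun s : ℝ => -(s ^ 3) / 6) (-(s ^ 2) / 2) s := by
      have := ((hasDerivAt_pow 3 s).neg).div_const 6
      exact this.congr_deriv (by push_cast; ring)
    exact h.deriv
  rw [iteratedDeriv_two_eq, d1]
  funext s
  have h : HasDerivAt (fun s : ℝ => -(s ^ 2) / 2) (-s) s := by
    have := ((hasDerivAt_pow 2 s).neg).div_const 2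
    exact this.congr_deriv (by push_cast; ring)
  exact h.deriv

/-- **An example with non-integrable speed (Section 6).** For every `n ≥ 1` there are a
smooth solution `u` of `∂ₜu = -Δ²u` on `ℝⁿ × (0,∞)` and constants `k₀ > 0`, `k₁ ≠ 0`
such that for every `s > 0` there is `x_s ∈ ℝⁿ` with `|Δu|²(x_s,s) = k₀/s`, and for
every `t > 0` there is `y(t) ∈ ℝⁿ` with `(Δ²u)(y(t),t) = k₁/t`. In particular the bounds
`|Δu|² ≤ k₀/t`, `|Δ²u| ≤ |k₁|/t` are attained at all times and the speed `|∂ₜu|` is not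
integrable in time near `t = 0`. -/
theorem biharmonic_example_sharp_rate (n : ℕ) (hn : 0 < n) :
    ∃ u : EuclideanSpace ℝ (Fin n) → ℝ → ℝ, ∃ k₀ k₁ : ℝ, 0 < k₀ ∧ k₁ ≠ 0 ∧
      ContDiffOn ℝ (⊤ : ℕ∞) (fun p : EuclideanSpace ℝ (Fin n) × ℝ => u p.1 p.2)
        (Set.univ ×ˢ Set.Ioi 0) ∧
      (∀ (x : EuclideanSpace ℝ (Fin n)) (t : ℝ), 0 < t →
        HasDerivAt (fun τ => u x τ) (-(iterLap 2 (fun y => u y t) x)) t) ∧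
      (∀ s : ℝ, 0 < s → ∃ x : EuclideanSpace ℝ (Fin n),
        (Lap (fun y => u y s) x) ^ 2 = k₀ / s) ∧
      (∀ t : ℝ, 0 < t → ∃ y : EuclideanSpace ℝ (Fin n),
        iterLap 2 (fun z => u z t) y = k₁ / t) := by
  set i0 : Fin n := ⟨0, hn⟩
  refine ⟨fun x t => t * x i0 - (x i0) ^ 5 / 120, 1/36, 1, by norm_num, one_ne_zero, ?_, ?_, ?_, ?_⟩
  · -- smoothness
    have h1 : ContDiff ℝ (⊤ : ℕ∞) (fun p : EuclideanSpace ℝ (Fin n) × ℝ =>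
        p.2 * p.1 i0 - (p.1 i0) ^ 5 / 120) := by
      have hproj : ContDiff ℝ (⊤ : ℕ∞) (fun p : EuclideanSpace ℝ (Fin n) × ℝ => p.1 i0) :=
        (EuclideanSpace.proj i0 : EuclideanSpace ℝ (Fin n) →L[ℝ] ℝ).contDiff.comp contDiff_fst
      exact (contDiff_snd.mul hproj).sub ((hproj.pow 5).div_const 120)
    exact h1.contDiffOn
  all_goals
    have hg1 : ∀ t : ℝ, ContDiff ℝ (⊤ : ℕ∞) (fun s : ℝ => t * s - s ^ 5 / 120) := by
      intro t
      exact ((contDiff_const.mul contDiff_id).sub ((contDiff_id.pow 5).div_const 120))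
    have hg2 : ContDiff ℝ (⊤ : ℕ∞) (fun s : ℝ => -(s ^ 3) / 6) :=
      ((contDiff_id.pow 3).neg).div_const 6
    have hlap : ∀ (t : ℝ) (x : EuclideanSpace ℝ (Fin n)),
        Lap (fun y : EuclideanSpace ℝ (Fin n) => t * y i0 - (y i0) ^ 5 / 120) x
          = -((x i0) ^ 3) / 6 := by
      intro t x
      rw [lap_comp_proj i0 _ (hg1 t) x, g1_second_deriv]
    have hlap2 : ∀ (t : ℝ) (x : EuclideanSpace ℝ (Fin n)),
        iterLap 2 (fun y : EuclideanSpace ℝ (Fin n) => t * y i0 - (y i0) ^ 5 / 120) x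
          = -(x i0) := by
      intro t x
      show Lap (Lap _) x = _
      have : Lap (fun y : EuclideanSpace ℝ (Fin n) => t * y i0 - (y i0) ^ 5 / 120)
          = fun y : EuclideanSpace ℝ (Fin n) => -((y i0) ^ 3) / 6 := funext (hlap t)
      rw [this, lap_comp_proj i0 _ hg2 x, g2_second_deriv]
  · -- PDE
    intro x t _
    have := (hasDerivAt_mul_const (x i0)).sub_const ((x i0) ^ 5 / 120) (x := t)
    rw [hlap2 t x]
    simpa using this
  · -- |Δu|² attains k₀/s
    intro s hs
    refine ⟨EuclideanSpace.single i0 (s ^ (-(1:ℝ)/6)), ?_⟩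
    rw [hlap s]
    have hx : (EuclideanSpace.single i0 (s ^ (-(1:ℝ)/6)) : EuclideanSpace ℝ (Fin n)) i0
        = s ^ (-(1:ℝ)/6) := by simp [EuclideanSpace.single_apply]
    rw [hx]
    have h6 : (s ^ (-(1:ℝ)/6)) ^ (6:ℕ) = s⁻¹ := by
      rw [← Real.rpow_natCast (s ^ (-(1:ℝ)/6)) 6, ← Real.rpow_mul hs.le]
      norm_num [Real.rpow_neg_one]
    have : (-((s ^ (-(1:ℝ)/6)) ^ 3) / 6) ^ 2 = (s ^ (-(1:ℝ)/6)) ^ (6:ℕ) / 36 := by ring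
    rw [this, h6]
    field_simp
  · -- Δ²u attains k₁/t
    intro t ht
    refine ⟨EuclideanSpace.single i0 (-(1/t)), ?_⟩
    rw [hlap2 t]
    have hy : (EuclideanSpace.single i0 (-(1/t)) : EuclideanSpace ℝ (Fin n)) i0
        = -(1/t) := by simp [EuclideanSpace.single_apply]
    rw [hy]
    simp
end
end
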